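/- arXiv:2604.28116 — 2 statements merged into one kernel-verified Lean document; each statement's English description precedes it below -/
import Mathlib

section
/- Let M be an ℓ×N matrix over ℚ with entries in {0,1} and rank r ≥ 1. For 1 ≤ d ≤ r let q_d(M) be the least index q such that the first q columns of M span a subspace of ℚ^ℓ of dimension d; the tuple (r; q_1,…,q_r) is called the rank profile of M. Then for every ℓ, N ≥ 1 and every tuple (r; q_1,…,q_r) with 1 ≤ q_1 < ⋯ < q_r ≤ N, the number of ℓ×N matrices with entries in {0,1} whose rank profile equals (r; q_1,…,q_r) is at most 2^{ℓ²} · 2^{rN − Σ_{d=1}^r q_d}. -/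
/-!
Build the matrix column by column. A pivot column is one of at most `2 ^ l` Boolean vectors,
and there are `r ≤ l` of them. Any other column `j` lies in the span of the columns before it;
by the rank profile this span has dimension `k = #{d | q d ≤ j}`, and some `k` coordinates
determine its vectors, so it contains at most `2 ^ k` vectors with entries in `{0, 1}`.
Multiplying these bounds gives `2 ^ (l * r) * 2 ^ (∑ j, #{d | q d ≤ j})`, and
`∑ j, #{d | q d ≤ j} = ∑ d, (N - q d)`.
-/

/-- The dimension (over `ℚ`) of the span of the first `q` columns of the matrix `M`. -/
noncomputable def colSpanDim {l N : ℕ} (M : Matrix (Fin l) (Fin N) ℚ) (q : ℕ) : ℕ :=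
  Module.finrank ℚ
    ↥(Submodule.span ℚ {v : Fin l → ℚ | ∃ j : Fin N, (j : ℕ) < q ∧ v = fun i => M i j})

open Finset Module

section Counting

variable {β : Type*} [DecidableEq β]

def nextValues {N : ℕ} (S : Finset (Fin N → β)) (f : Fin N → β) (j : Fin N) : Finset β :=
  {g ∈ S | ∀ i < j, g i = f i}.image fun g => g j

theorem card_le_prod_of_card_nextValues_le :
    ∀ {N : ℕ} (S : Finset (Fin N → β)) (b : Fin N → ℕ),
      (∀ f ∈ S, ∀ j, #(nextValues S f j) ≤ b j) → #S ≤ ∏ j, b j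
  | 0, S, _, _ => by simpa using card_le_one.2 fun _ _ _ _ => Subsingleton.elim _ _
  | N + 1, S, b, hb => by
    rw [Fin.prod_univ_castSucc, mul_comm]
    refine (card_le_mul_card_image S _ ?_).trans
      (Nat.mul_le_mul_left _ (card_le_prod_of_card_nextValues_le (S.image Fin.init) _ ?_))
    · rintro _ hinit
      obtain ⟨f, hf, rfl⟩ := mem_image.1 hinit
      refine le_trans (card_le_card_of_injOn (fun g => g (Fin.last N)) ?_ ?_) (hb f hf _)
      · intro g hg
        obtain ⟨hgS, hgf⟩ := mem_filter.1 (mem_coe.1 hg)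
        refine mem_image.2 ⟨g, mem_filter.2 ⟨hgS, fun i hi => ?_⟩, rfl⟩
        obtain ⟨i, rfl⟩ := Fin.exists_castSucc_eq.2 hi.ne
        exact congrFun hgf i
      · intro g hg g' hg' h
        rw [← Fin.snoc_init_self g, ← Fin.snoc_init_self g', (mem_filter.1 (mem_coe.1 hg)).2,
          (mem_filter.1 (mem_coe.1 hg')).2, show g (Fin.last N) = g' (Fin.last N) from h]
    · rintro _ hinit j
      obtain ⟨f, hf, rfl⟩ := mem_image.1 hinit
      refine le_trans (card_le_card fun x hx => ?_) (hb f hf j.castSucc)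
      obtain ⟨_, hx', rfl⟩ := mem_image.1 hx
      obtain ⟨hinit, hgf⟩ := mem_filter.1 hx'
      obtain ⟨g, hg, rfl⟩ := mem_image.1 hinit
      refine mem_image.2 ⟨g, mem_filter.2 ⟨hg, fun i hi => ?_⟩, rfl⟩
      obtain ⟨i, rfl⟩ := Fin.exists_castSucc_eq.2 (hi.trans (Fin.castSucc_lt_last j)).ne
      exact hgf i (Fin.castSucc_lt_castSucc_iff.1 hi)

end Counting

section Coordinates

variable {K ι : Type*}

def boolVec [Zero K] [One K] (v : ι → Bool) : ι → K := fun i => if v i then 1 else 0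

theorem boolVec_injective [Zero K] [One K] [NeZero (1 : K)] :
    Function.Injective (boolVec : (ι → Bool) → ι → K) := by
  intro v w h
  funext i
  have := congrFun h i
  cases hv : v i <;> cases hw : w i <;> simp_all [boolVec]

variable [Field K] [Fintype ι]

theorem Submodule.exists_finset_card_le_finrank_forall_eq_zero (V : Submodule K (ι → K)) :
    ∃ s : Finset ι, #s ≤ finrank K V ∧ ∀ x ∈ V, (∀ i ∈ s, x i = 0) → x = 0 := by
  classical
  induction hn : finrank K V using Nat.strong_induction_on generalizing V with
  | _ n ih =>
  by_cases hV : V = ⊥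
  · exact ⟨∅, by simp, fun x hx _ => by simpa [hV] using hx⟩
  obtain ⟨x, hxV, hx0⟩ := Submodule.exists_mem_ne_zero_of_ne_bot hV
  obtain ⟨i, hi⟩ := Function.ne_iff.1 hx0
  -- cutting `V` by the hyperplane `x i = 0` lowers the dimension
  set V' := V ⊓ LinearMap.ker (LinearMap.proj i : (ι → K) →ₗ[K] K)
  have hlt : finrank K V' < n :=
    hn ▸ Submodule.finrank_lt_finrank_of_lt (inf_le_left.lt_of_ne fun h => hi (h ▸ hxV).2)
  obtain ⟨s, hs, hsV⟩ := ih _ hlt V' rfl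
  refine ⟨insert i s, (card_insert_le i s).trans (by omega), fun y hy hys => ?_⟩
  exact hsV y ⟨hy, hys i (mem_insert_self i s)⟩ fun j hj => hys j (mem_insert_of_mem hj)

theorem card_le_two_pow_finrank_of_boolVec_mem (V : Submodule K (ι → K))
    (s : Finset (ι → Bool)) (hs : ∀ v ∈ s, boolVec v ∈ V) : #s ≤ 2 ^ finrank K V := by
  classical
  obtain ⟨t, ht, htV⟩ := V.exists_finset_card_le_finrank_forall_eq_zero
  calc #s ≤ #(univ : Finset (t → Bool)) := by
        refine card_le_card_of_injOn (fun v i => v i) (fun _ _ => mem_coe.2 (mem_univ _)) ?_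
        intro v hv w hw hvw
        refine boolVec_injective (K := K) (sub_eq_zero.1 (htV _ (V.sub_mem (hs v hv) (hs w hw))
          fun i hi => ?_))
        simp [boolVec, congrFun hvw ⟨i, hi⟩]
    _ = 2 ^ #t := by simp
    _ ≤ 2 ^ finrank K V := Nat.pow_le_pow_right two_pos ht

end Coordinates

section RankProfile

variable {l N r : ℕ}

def colSpanPrefix (M : Matrix (Fin l) (Fin N) ℚ) (m : ℕ) : Submodule ℚ (Fin l → ℚ) :=
  Submodule.span ℚ {v | ∃ j : Fin N, (j : ℕ) < m ∧ v = fun i => M i j}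

theorem finrank_colSpanPrefix (M : Matrix (Fin l) (Fin N) ℚ) (m : ℕ) :
    finrank ℚ (colSpanPrefix M m) = colSpanDim M m := rfl

theorem colSpanPrefix_mono (M : Matrix (Fin l) (Fin N) ℚ) : Monotone (colSpanPrefix M) :=
  fun _ _ h => Submodule.span_mono fun _ ⟨j, hj, hv⟩ => ⟨j, hj.trans_le h, hv⟩

theorem colSpanDim_mono (M : Matrix (Fin l) (Fin N) ℚ) : Monotone (colSpanDim M) :=
  fun _ _ h => Submodule.finrank_mono (colSpanPrefix_mono M h)

theorem colSpanPrefix_congr {M M' : Matrix (Fin l) (Fin N) ℚ} {m : ℕ}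
    (h : ∀ j : Fin N, (j : ℕ) < m → ∀ i, M i j = M' i j) :
    colSpanPrefix M m = colSpanPrefix M' m := by
  unfold colSpanPrefix
  congr 1
  ext v
  exact exists_congr fun j => and_congr_right fun hj => by rw [funext (h j hj)]

theorem col_mem_colSpanPrefix_of_colSpanDim_eq {M : Matrix (Fin l) (Fin N) ℚ} {j : Fin N}
    (h : colSpanDim M j = colSpanDim M (j + 1)) : (fun i => M i j) ∈ colSpanPrefix M j := by
  rw [Submodule.eq_of_le_of_finrank_eq (colSpanPrefix_mono M (Nat.le_succ j)) h]
  exact Submodule.subset_span ⟨j, Nat.lt_succ_self j, rfl⟩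

def HasRankProfile (M : Matrix (Fin l) (Fin N) ℚ) (q : Fin r → ℕ) : Prop :=
  colSpanDim M N = r ∧ ∀ d : Fin r, IsLeast {s : ℕ | colSpanDim M s = (d : ℕ) + 1} (q d)

theorem HasRankProfile.le_nrows {M : Matrix (Fin l) (Fin N) ℚ} {q : Fin r → ℕ}
    (hM : HasRankProfile M q) : r ≤ l := by
  simpa [← hM.1, ← finrank_colSpanPrefix] using Submodule.finrank_le (colSpanPrefix M N)

def pivotCount (q : Fin r → ℕ) (s : ℕ) : ℕ := #{d | q d ≤ s}

theorem lt_pivotCount_iff {q : Fin r → ℕ} (hq : StrictMono q) (s : ℕ) (d : Fin r) :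
    (d : ℕ) < pivotCount q s ↔ q d ≤ s := by
  constructor
  · intro hd
    by_contra! hsd
    have : ({d' | q d' ≤ s} : Finset (Fin r)) ⊆ Iio d := fun d' hd' =>
      mem_Iio.2 (hq.lt_iff_lt.1 ((mem_filter.1 hd').2.trans_lt hsd))
    have := card_le_card this
    rw [Fin.card_Iio] at this
    exact this.not_gt hd
  · intro hds
    have : Iic d ⊆ ({d' | q d' ≤ s} : Finset (Fin r)) := fun d' hd' =>
      mem_filter.2 ⟨mem_univ _, (hq.monotone (mem_Iic.1 hd')).trans hds⟩
    have := card_le_card this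
    rw [Fin.card_Iic] at this
    exact this

theorem HasRankProfile.colSpanDim_eq {M : Matrix (Fin l) (Fin N) ℚ} {q : Fin r → ℕ}
    (hM : HasRankProfile M q) (hq : StrictMono q) {s : ℕ} (hs : s ≤ N) :
    colSpanDim M s = pivotCount q s := by
  generalize hk : pivotCount q s = k
  have hkr : k ≤ r := hk ▸ (card_filter_le _ _).trans (by simp)
  apply le_antisymm
  · rcases hkr.lt_or_eq with hlt | rfl
    · -- the pivot `k` lies beyond `s`, where the dimension first reaches `k + 1`
      have hnext : ¬ q ⟨k, hlt⟩ ≤ s := (lt_pivotCount_iff hq s ⟨k, hlt⟩).not.1 (by simp [hk])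
      have h1 := colSpanDim_mono M (le_of_not_ge hnext)
      have h2 : colSpanDim M s ≠ k + 1 := fun h => hnext ((hM.2 _).2 h)
      rw [(hM.2 _).1] at h1
      simp only at h1
      omega
    · exact hM.1 ▸ colSpanDim_mono M hs
  · rcases Nat.eq_zero_or_pos k with h0 | hpos
    · omega
    · have hlast : q ⟨k - 1, by omega⟩ ≤ s :=
        (lt_pivotCount_iff hq s _).1 (by simp only [hk]; omega)
      have h1 := colSpanDim_mono M hlast
      rw [(hM.2 _).1] at h1
      simp only at h1
      omega

theorem HasRankProfile.col_mem_colSpanPrefix {M : Matrix (Fin l) (Fin N) ℚ} {q : Fin r → ℕ}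
    (hM : HasRankProfile M q) (hq : StrictMono q) (j : Fin N) (hj : (j : ℕ) + 1 ∉ Set.range q) :
    (fun i => M i j) ∈ colSpanPrefix M j := by
  apply col_mem_colSpanPrefix_of_colSpanDim_eq
  rw [hM.colSpanDim_eq hq j.is_lt.le, hM.colSpanDim_eq hq j.is_lt, pivotCount, pivotCount]
  congr 1
  refine filter_congr fun d _ => ?_
  have : q d ≠ j + 1 := fun h => hj ⟨d, h⟩
  omega

theorem sum_pivotCount (q : Fin r → ℕ) :
    ∑ j : Fin N, pivotCount q j = ∑ d, (N - q d) := by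
  simp only [pivotCount, card_filter]
  rw [sum_comm]
  refine sum_congr rfl fun d _ => ?_
  rw [← card_filter]
  have := card_filter_add_card_filter_not (s := (univ : Finset (Fin N))) (fun j => (j : ℕ) < q d)
  simp only [Fin.card_filter_val_lt, not_lt, card_univ, Fintype.card_fin] at this
  omega

theorem card_pivots_le (q : Fin r → ℕ) : #{j : Fin N | (j : ℕ) + 1 ∈ Set.range q} ≤ r := by
  classical
  calc #{j : Fin N | (j : ℕ) + 1 ∈ Set.range q} ≤ #(univ.image q) := by
        refine card_le_card_of_injOn (fun j => (j : ℕ) + 1) (fun j hj => ?_) ?_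
        · obtain ⟨d, hd⟩ := (mem_filter.1 hj).2
          exact mem_image.2 ⟨d, mem_univ d, hd⟩
        · exact fun _ _ _ _ h => Fin.ext (Nat.succ_injective h)
    _ ≤ r := card_image_le.trans (by simp)

end RankProfile

section BoolMatrices

variable {l N r : ℕ}

def ofBoolCols (C : Fin N → Fin l → Bool) : Matrix (Fin l) (Fin N) ℚ :=
  Matrix.of fun i j => boolVec (C j) i

theorem natCard_zeroOne_le_natCard_ofBoolCols (P : Matrix (Fin l) (Fin N) ℚ → Prop) :
    Nat.card {M : Matrix (Fin l) (Fin N) ℚ // (∀ i j, M i j = 0 ∨ M i j = 1) ∧ P M} ≤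
      Nat.card {C : Fin N → Fin l → Bool // P (ofBoolCols C)} := by
  refine Nat.card_le_card_of_surjective (fun C => ⟨ofBoolCols C.1,
    fun i j => by by_cases h : C.1 j i <;> simp [ofBoolCols, boolVec, h], C.2⟩) ?_
  rintro ⟨M, h01, hP⟩
  have hM : ofBoolCols (fun j i => decide (M i j = 1)) = M := by
    ext i j
    rcases h01 i j with h | h <;> simp [ofBoolCols, boolVec, h]
  exact ⟨⟨fun j i => decide (M i j = 1), hM.symm ▸ hP⟩, Subtype.ext hM⟩

theorem natCard_hasRankProfile_ofBoolCols_le {q : Fin r → ℕ} (hq : StrictMono q) :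
    Nat.card {C : Fin N → Fin l → Bool // HasRankProfile (ofBoolCols C) q} ≤
      2 ^ (l ^ 2) * 2 ^ (∑ d, (N - q d)) := by
  classical
  rw [Nat.card_eq_fintype_card, Fintype.card_subtype]
  set S : Finset (Fin N → Fin l → Bool) := {C | HasRankProfile (ofBoolCols C) q}
  rcases S.eq_empty_or_nonempty with hS | ⟨C, hC⟩
  · simp [hS]
  have hrl : r ≤ l := (mem_filter.1 hC).2.le_nrows
  -- `q d` counts columns from `1`, so the pivot columns are the `j : Fin N` with `j + 1 = q d`
  set isPivot : Fin N → Prop := fun j => (j : ℕ) + 1 ∈ Set.range q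
  set e : Fin N → ℕ := fun j => if isPivot j then l else pivotCount q j
  have hnext : ∀ f ∈ S, ∀ j, #(nextValues S f j) ≤ 2 ^ e j := by
    intro f hf j
    by_cases hj : isPivot j
    · simpa [e, hj] using card_le_univ (nextValues S f j)
    simp only [e, if_neg hj]
    have hf := (mem_filter.1 hf).2
    rw [← hf.colSpanDim_eq hq j.is_lt.le, ← finrank_colSpanPrefix]
    refine card_le_two_pow_finrank_of_boolVec_mem _ _ fun v hv => ?_
    obtain ⟨g, hg, rfl⟩ := mem_image.1 hv
    obtain ⟨hgS, hgf⟩ := mem_filter.1 hg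
    rw [colSpanPrefix_congr (M' := ofBoolCols g) fun i hi _ => by
      simp [ofBoolCols, hgf i (Fin.lt_def.2 hi)]]
    exact (mem_filter.1 hgS).2.col_mem_colSpanPrefix hq j hj
  have hsum : ∑ j, e j ≤ l ^ 2 + ∑ d, (N - q d) := by
    calc ∑ j, e j ≤ ∑ j, ((if isPivot j then l else 0) + pivotCount q j) :=
          sum_le_sum fun j _ => by by_cases hj : isPivot j <;> simp [e, hj]
      _ = l * #{j | isPivot j} + ∑ d, (N - q d) := by
          rw [sum_add_distrib, sum_ite, sum_const_zero, sum_const, sum_pivotCount, smul_eq_mul,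
            add_zero, mul_comm]
      _ ≤ l * l + ∑ d, (N - q d) := by
          gcongr
          exact (card_pivots_le q).trans hrl
      _ = l ^ 2 + ∑ d, (N - q d) := by rw [sq]
  calc #S ≤ ∏ j, 2 ^ e j := card_le_prod_of_card_nextValues_le S _ hnext
    _ = 2 ^ ∑ j, e j := prod_pow_eq_pow_sum _ _ _
    _ ≤ 2 ^ (l ^ 2 + ∑ d, (N - q d)) := Nat.pow_le_pow_right two_pos hsum
    _ = 2 ^ (l ^ 2) * 2 ^ ∑ d, (N - q d) := pow_add _ _ _

end BoolMatrices

theorem statement_15_general (l N r : ℕ)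
    (q : Fin r → ℕ) (hmono : StrictMono q) (hrange : ∀ d, 1 ≤ q d ∧ q d ≤ N) :
    (Nat.card {M : Matrix (Fin l) (Fin N) ℚ //
        (∀ i j, M i j = 0 ∨ M i j = 1) ∧
        colSpanDim M N = r ∧
        ∀ d : Fin r, IsLeast {s : ℕ | colSpanDim M s = (d : ℕ) + 1} (q d)} : ℝ) ≤
      2 ^ (l ^ 2) * (2 : ℝ) ^ (((r : ℝ) * (N : ℝ)) - ∑ d, (q d : ℝ)) := by
  have hcard := (natCard_zeroOne_le_natCard_ofBoolCols
    fun M : Matrix (Fin l) (Fin N) ℚ => HasRankProfile M q).trans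
      (natCard_hasRankProfile_ofBoolCols_le hmono)
  have hexp : ((∑ d, (N - q d) : ℕ) : ℝ) = r * N - ∑ d, (q d : ℝ) := by
    simp [Nat.cast_sum, Nat.cast_sub (hrange _).2, sum_sub_distrib, mul_comm]
  rw [← hexp, Real.rpow_natCast]
  exact_mod_cast hcard

theorem statement_15 (l N r : ℕ) (hl : 1 ≤ l) (hN : 1 ≤ N) (hr : 1 ≤ r)
    (q : Fin r → ℕ) (hmono : StrictMono q) (hrange : ∀ d, 1 ≤ q d ∧ q d ≤ N) :
    (Nat.card {M : Matrix (Fin l) (Fin N) ℚ //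
        (∀ i j, M i j = 0 ∨ M i j = 1) ∧
        colSpanDim M N = r ∧
        ∀ d : Fin r, IsLeast {s : ℕ | colSpanDim M s = (d : ℕ) + 1} (q d)} : ℝ) ≤
      2 ^ (l ^ 2) * (2 : ℝ) ^ (((r : ℝ) * (N : ℝ)) - ∑ d, (q d : ℝ)) :=
  statement_15_general l N r q hmono hrange
end

section
/- There exist an absolute constant c > 0 and an absolute threshold R₀ such that the following holds for all integers R and N with R₀ ≤ R ≤ N. Let X be the random variable taking values in the integers of (N, N+R] with ℙ(X = j) proportional to 1/j (i.e. ℙ(X = j) = (1/j) / Σ_{N < j' ≤ N+R} (1/j') for N < j ≤ N+R), and let φ_X(ξ) := 𝔼[e^{iξX}] be its characteristic function. Then: (1) for all real ξ with |ξ| ≤ 16/R one has |φ_X(ξ)| ≤ 1 − c·ξ²·R²; and (2) for all real ξ with 16/R ≤ |ξ| ≤ π one has |φ_X(ξ)| ≤ 1/2. -/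
/-!
Write `p j = ℙ(X = j)` (`harmonicProb N R j`). Since `R ≤ N`, every `p j` lies in
`[1/(2R), 2/R]`, and `p` is decreasing.

For `16/R ≤ |ξ| ≤ π`, summation by parts against the decreasing weights bounds `|φ_X(ξ)|` by
`p (N+1)` times the largest partial sum of `e^{iξj}`, which is at most `π/|ξ|`; this gives
`|φ_X(ξ)| ≤ 2π/(R|ξ|) ≤ π/8`.

For `|ξ| ≤ 16/R`, `1 - |φ_X(ξ)|² = ∑_{j,k} p_j p_k (1 - cos ξ(j-k))`. With `m = ⌊R/16⌋`, the
`≈ R·m` pairs with `m < k - j ≤ 2m` have `|ξ(k-j)| ≤ 2`, where `1 - cos t ≥ t²/8`, so each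
contributes at least `ξ²m²/(32R²)`. Hence `1 - |φ_X(ξ)|² ≳ ξ²R²`, and taking square roots
gives the first bound.
-/

/-- The characteristic function `φ_X(ξ) = 𝔼[e^{iξX}]` of the random variable `X`
taking integer values in `(N, N+R]` with `ℙ(X = j)` proportional to `1/j`. -/
noncomputable def phiX (N R : ℕ) (ξ : ℝ) : ℂ :=
  (∑ j ∈ Finset.Ioc N (N + R), ((j : ℂ))⁻¹ * Complex.exp ((ξ * (j : ℝ) : ℝ) * Complex.I)) /
    ((∑ j ∈ Finset.Ioc N (N + R), ((j : ℝ))⁻¹ : ℝ) : ℂ)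

open Finset Complex
open scoped Real

theorem sq_div_eight_le_one_sub_cos {x : ℝ} (hx : |x| ≤ π) : x ^ 2 / 8 ≤ 1 - Real.cos x := by
  have hπ : π ^ 2 ≤ 16 := by nlinarith [Real.pi_le_four, Real.pi_pos]
  have : x ^ 2 / 8 ≤ 2 / π ^ 2 * x ^ 2 := by
    rw [div_mul_eq_mul_div, div_le_div_iff₀ (by norm_num) (by positivity)]
    nlinarith [sq_nonneg x]
  linarith [Real.cos_le_one_sub_mul_cos_sq hx]

theorem le_one_sub_of_sq_le {a x : ℝ} (ha : 0 ≤ a) (hx : x ≤ 1) (h : a ^ 2 ≤ 1 - 2 * x) :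
    a ≤ 1 - x :=
  pow_le_pow_iff_left₀ ha (by linarith) two_ne_zero |>.1 (by nlinarith [sq_nonneg x])

theorem two_mul_abs_div_pi_le_norm_exp_mul_I_sub_one {x : ℝ} (hx : |x| ≤ π) :
    2 * |x| / π ≤ ‖exp (x * I) - 1‖ := by
  have hx2 : |x / 2| ≤ π := by rw [abs_div, abs_two]; linarith [abs_nonneg x]
  have hsin : 2 / π * |x / 2| ≤ Real.sin |x / 2| :=
    Real.mul_le_sin (abs_nonneg _) (by rw [abs_div, abs_two]; linarith)
  rw [mul_comm (x : ℂ), norm_exp_I_mul_ofReal_sub_one, norm_mul, Real.norm_eq_abs,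
    Real.norm_eq_abs, abs_two, Real.abs_sin_eq_sin_abs_of_abs_le_pi hx2]
  rw [abs_div, abs_two] at hsin ⊢
  have : 2 * |x| / π = 2 * (2 / π * (|x| / 2)) := by ring
  linarith

theorem norm_geom_sum_exp_mul_I_le {x : ℝ} (hx0 : x ≠ 0) (hx : |x| ≤ π) (n : ℕ) :
    ‖∑ i ∈ range n, exp ((x * i : ℝ) * I)‖ ≤ π / |x| := by
  have hpos : 0 < 2 * |x| / π := by have := Real.pi_pos; positivity
  have hden := two_mul_abs_div_pi_le_norm_exp_mul_I_sub_one hx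
  have hz : exp (x * I) ≠ 1 := fun h => by simp [h] at hden; linarith
  have hnum : ‖exp (x * I) ^ n - 1‖ ≤ 2 := (norm_sub_le _ _).trans (by
    rw [norm_pow, norm_exp_ofReal_mul_I]; norm_num)
  have hpow : ∀ i : ℕ, exp ((x * i : ℝ) * I) = exp (x * I) ^ i := fun i => by
    rw [← Complex.exp_nat_mul]; push_cast; ring_nf
  simp_rw [hpow]
  rw [geom_sum_eq hz, norm_div]
  calc ‖exp (x * I) ^ n - 1‖ / ‖exp (x * I) - 1‖ ≤ 2 / (2 * |x| / π) :=
        div_le_div₀ zero_le_two hnum hpos hden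
    _ = π / |x| := by field_simp

theorem norm_sum_range_smul_le_of_antitone {E : Type*} [SeminormedAddCommGroup E]
    [NormedSpace ℝ E] {f : ℕ → ℝ} {z : ℕ → E} {b : ℝ} (hf : Antitone f) (hf0 : ∀ i, 0 ≤ f i)
    (hz : ∀ k, ‖∑ i ∈ range k, z i‖ ≤ b) (n : ℕ) :
    ‖∑ i ∈ range n, f i • z i‖ ≤ f 0 * b := by
  rw [sum_range_by_parts]
  have hdiff : ∀ i ∈ range (n - 1), ‖(f (i + 1) - f i) • ∑ j ∈ range (i + 1), z j‖
      ≤ (f i - f (i + 1)) * b := by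
    intro i _
    rw [norm_smul, Real.norm_eq_abs, abs_sub_comm, abs_of_nonneg (sub_nonneg.2 (hf i.le_succ))]
    exact mul_le_mul_of_nonneg_left (hz _) (sub_nonneg.2 (hf i.le_succ))
  calc ‖f (n - 1) • ∑ i ∈ range n, z i
          - ∑ i ∈ range (n - 1), (f (i + 1) - f i) • ∑ j ∈ range (i + 1), z j‖
      ≤ f (n - 1) * b + ∑ i ∈ range (n - 1), (f i - f (i + 1)) * b := by
        refine (norm_sub_le _ _).trans
          (add_le_add ?_ ((norm_sum_le _ _).trans (sum_le_sum hdiff)))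
        rw [norm_smul, Real.norm_of_nonneg (hf0 _)]
        exact mul_le_mul_of_nonneg_left (hz n) (hf0 _)
    _ = f 0 * b := by rw [← sum_mul, sum_range_sub', ← add_mul, add_sub_cancel]

theorem sq_sum_sub_sq_norm_sum_mul_exp {ι : Type*} (s : Finset ι) (w θ : ι → ℝ) :
    (∑ j ∈ s, w j) ^ 2 - ‖∑ j ∈ s, (w j : ℂ) * exp (θ j * I)‖ ^ 2
      = ∑ j ∈ s, ∑ k ∈ s, w j * w k * (1 - Real.cos (θ j - θ k)) := by
  rw [Complex.sq_norm, normSq_apply, re_sum, im_sum, sq]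
  simp only [re_ofReal_mul, im_ofReal_mul, exp_ofReal_mul_I_re, exp_ofReal_mul_I_im, sum_mul_sum,
    ← sum_add_distrib, ← sum_sub_distrib, Real.cos_sub]
  exact sum_congr rfl fun j _ => sum_congr rfl fun k _ => by ring

theorem sum_Ioc_eq_sum_range_add {M : Type*} [AddCommMonoid M] (f : ℕ → M) (N R : ℕ) :
    ∑ j ∈ Ioc N (N + R), f j = ∑ i ∈ range R, f (N + 1 + i) := by
  rw [← Ico_add_one_add_one_eq_Ioc, sum_Ico_eq_sum_range]
  simp only [add_right_comm N R 1, Nat.add_sub_cancel_left]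

theorem le_sum_sum_of_band {f : ℕ → ℕ → ℝ} {N R m : ℕ} {ε : ℝ} (h2m : 2 * m ≤ R)
    (hf : ∀ j ∈ Ioc N (N + R), ∀ k ∈ Ioc N (N + R), 0 ≤ f j k)
    (hε : ∀ j ∈ Ioc N (N + (R - 2 * m)), ∀ k ∈ Ioc (j + m) (j + 2 * m), ε ≤ f j k) :
    ((R - 2 * m : ℕ) : ℝ) * (m * ε) ≤ ∑ j ∈ Ioc N (N + R), ∑ k ∈ Ioc N (N + R), f j k := by
  have hrows : Ioc N (N + (R - 2 * m)) ⊆ Ioc N (N + R) := Ioc_subset_Ioc_right (by omega)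
  have hband : ∀ j ∈ Ioc N (N + (R - 2 * m)), Ioc (j + m) (j + 2 * m) ⊆ Ioc N (N + R) :=
    fun j hj => by rw [mem_Ioc] at hj; exact Ioc_subset_Ioc (by omega) (by omega)
  have hrow : ∀ j ∈ Ioc N (N + (R - 2 * m)), m * ε ≤ ∑ k ∈ Ioc N (N + R), f j k := by
    intro j hj
    calc (m : ℝ) * ε = #(Ioc (j + m) (j + 2 * m)) • ε := by
          rw [Nat.card_Ioc, nsmul_eq_mul]; congr; omega
      _ ≤ ∑ k ∈ Ioc (j + m) (j + 2 * m), f j k := card_nsmul_le_sum _ _ _ (hε j hj)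
      _ ≤ ∑ k ∈ Ioc N (N + R), f j k :=
          sum_le_sum_of_subset_of_nonneg (hband j hj) fun k hk _ => hf j (hrows hj) k hk
  calc ((R - 2 * m : ℕ) : ℝ) * (m * ε) = #(Ioc N (N + (R - 2 * m))) • ((m : ℝ) * ε) := by
        rw [Nat.card_Ioc, nsmul_eq_mul, Nat.add_sub_cancel_left]
    _ ≤ ∑ j ∈ Ioc N (N + (R - 2 * m)), ∑ k ∈ Ioc N (N + R), f j k :=
        card_nsmul_le_sum _ _ _ hrow
    _ ≤ ∑ j ∈ Ioc N (N + R), ∑ k ∈ Ioc N (N + R), f j k :=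
        sum_le_sum_of_subset_of_nonneg hrows fun j hj _ => sum_nonneg fun k hk => hf j hj k hk

theorem div_add_le_sum_Ioc_inv (N R : ℕ) :
    (R : ℝ) / (N + R) ≤ ∑ j ∈ Ioc N (N + R), (j : ℝ)⁻¹ := by
  have h : ∀ j ∈ Ioc N (N + R), ((N + R : ℕ) : ℝ)⁻¹ ≤ (j : ℝ)⁻¹ := fun j hj => by
    rw [mem_Ioc] at hj
    exact inv_anti₀ (by exact_mod_cast Nat.zero_lt_of_lt hj.1) (by exact_mod_cast hj.2)
  simpa [Nat.card_Ioc, div_eq_mul_inv] using card_nsmul_le_sum _ _ _ h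

theorem sum_Ioc_inv_le_div (N R : ℕ) : ∑ j ∈ Ioc N (N + R), (j : ℝ)⁻¹ ≤ R / (N + 1) := by
  have h : ∀ j ∈ Ioc N (N + R), (j : ℝ)⁻¹ ≤ ((N + 1 : ℕ) : ℝ)⁻¹ := fun j hj => by
    rw [mem_Ioc] at hj
    exact inv_anti₀ (by positivity) (by exact_mod_cast hj.1)
  simpa [Nat.card_Ioc, div_eq_mul_inv] using sum_le_card_nsmul _ _ _ h

noncomputable def harmonicProb (N R j : ℕ) : ℝ := (j : ℝ)⁻¹ / ∑ i ∈ Ioc N (N + R), (i : ℝ)⁻¹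

section harmonicProb

variable {N R j k : ℕ} {ξ : ℝ}

theorem harmonicProb_nonneg : 0 ≤ harmonicProb N R j :=
  div_nonneg (by positivity) (sum_nonneg fun _ _ => by positivity)

theorem harmonicProb_anti (hj : 0 < j) (hjk : j ≤ k) :
    harmonicProb N R k ≤ harmonicProb N R j :=
  div_le_div_of_nonneg_right (inv_anti₀ (by exact_mod_cast hj) (by exact_mod_cast hjk))
    (sum_nonneg fun _ _ => by positivity)

theorem sum_harmonicProb (hR : 0 < R) : ∑ j ∈ Ioc N (N + R), harmonicProb N R j = 1 := by
  have : (0 : ℝ) < R / (N + R) := by positivity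
  exact (sum_div _ _ _).symm.trans (div_self (this.trans_le (div_add_le_sum_Ioc_inv N R)).ne')

theorem inv_two_mul_le_harmonicProb (hRN : R ≤ N) (hj : j ∈ Ioc N (N + R)) :
    (2 * R : ℝ)⁻¹ ≤ harmonicProb N R j := by
  rw [mem_Ioc] at hj
  have hR : (0 : ℝ) < R := by exact_mod_cast (show 0 < R by omega)
  have hjR : (j : ℝ) ≤ N + R := by exact_mod_cast hj.2
  have hNR : (R : ℝ) ≤ N := by exact_mod_cast hRN
  calc (2 * R : ℝ)⁻¹ ≤ (N + R : ℝ)⁻¹ / (R / (N + 1)) := by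
        rw [div_div_eq_mul_div, inv_mul_eq_div, div_div, inv_eq_one_div,
          div_le_div_iff₀ (by positivity) (by positivity)]
        nlinarith
    _ ≤ harmonicProb N R j :=
        div_le_div₀ (by positivity) (inv_anti₀ (by exact_mod_cast Nat.zero_lt_of_lt hj.1) hjR)
          ((div_add_le_sum_Ioc_inv N R).trans_lt' (by positivity)) (sum_Ioc_inv_le_div N R)

theorem harmonicProb_le (hRN : R ≤ N) (hj : N < j) : harmonicProb N R j ≤ 2 / R := by
  rcases Nat.eq_zero_or_pos R with rfl | hR
  · simp [harmonicProb]
  have hR : (0 : ℝ) < R := by exact_mod_cast hR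
  have hNR : (R : ℝ) ≤ N := by exact_mod_cast hRN
  calc harmonicProb N R j ≤ (N + 1 : ℝ)⁻¹ / (R / (N + R)) :=
        div_le_div₀ (by positivity) (inv_anti₀ (by positivity) (by exact_mod_cast hj))
          (by positivity) (div_add_le_sum_Ioc_inv N R)
    _ ≤ 2 / R := by
        rw [div_div_eq_mul_div, inv_mul_eq_div, div_div, div_le_div_iff₀ (by positivity) hR]
        nlinarith

theorem le_harmonicProb_mul_one_sub_cos (hRN : R ≤ N) {m : ℕ} (hj : j ∈ Ioc N (N + R))
    (hk : k ∈ Ioc N (N + R)) (hm : (m : ℝ) ≤ k - j) (hπ : |ξ| * (k - j) ≤ π) :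
    ξ ^ 2 * m ^ 2 / (32 * R ^ 2) ≤
      harmonicProb N R j * harmonicProb N R k * (1 - Real.cos (ξ * j - ξ * k)) := by
  have hR : (0 : ℝ) < R := by rw [mem_Ioc] at hj; exact_mod_cast (show 0 < R by omega)
  have hkj : (0 : ℝ) ≤ k - j := (Nat.cast_nonneg m).trans hm
  have hdist : ξ * j - ξ * k = -(ξ * (k - j)) := by ring
  have hcos := sq_div_eight_le_one_sub_cos (x := ξ * j - ξ * k)
    (by rwa [hdist, abs_neg, abs_mul, abs_of_nonneg hkj])
  calc ξ ^ 2 * m ^ 2 / (32 * R ^ 2) = (2 * R : ℝ)⁻¹ * (2 * R : ℝ)⁻¹ * ((ξ * m) ^ 2 / 8) := by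
        field_simp; ring
    _ ≤ harmonicProb N R j * harmonicProb N R k * ((ξ * j - ξ * k) ^ 2 / 8) := by
        rw [hdist, neg_sq, mul_pow, mul_pow]
        gcongr
        exacts [mul_nonneg harmonicProb_nonneg harmonicProb_nonneg, harmonicProb_nonneg,
          inv_two_mul_le_harmonicProb hRN hj, inv_two_mul_le_harmonicProb hRN hk]
    _ ≤ _ := by gcongr; exact mul_nonneg harmonicProb_nonneg harmonicProb_nonneg

theorem phiX_eq_sum_harmonicProb :
    phiX N R ξ = ∑ j ∈ Ioc N (N + R), (harmonicProb N R j : ℂ) * exp ((ξ * j : ℝ) * I) := by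
  rw [phiX, sum_div]
  refine sum_congr rfl fun j _ => ?_
  simp only [harmonicProb]
  push_cast
  ring

theorem norm_phiX_le (hRN : R ≤ N) (hξ0 : ξ ≠ 0) (hξ : |ξ| ≤ π) :
    ‖phiX N R ξ‖ ≤ 2 * π / (R * |ξ|) := by
  set f : ℕ → ℝ := fun i => harmonicProb N R (N + 1 + i)
  have hf : Antitone f := fun i i' h => harmonicProb_anti (by omega) (by omega)
  have hphi : phiX N R ξ
      = exp ((ξ * (N + 1 : ℕ) : ℝ) * I) * ∑ i ∈ range R, f i • exp ((ξ * i : ℝ) * I) := by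
    rw [phiX_eq_sum_harmonicProb, sum_Ioc_eq_sum_range_add, mul_sum]
    refine sum_congr rfl fun i _ => ?_
    rw [real_smul, mul_left_comm, ← Complex.exp_add]
    congr 2
    push_cast
    ring
  rw [hphi, norm_mul, norm_exp_ofReal_mul_I, one_mul]
  calc ‖∑ i ∈ range R, f i • exp ((ξ * i : ℝ) * I)‖ ≤ f 0 * (π / |ξ|) :=
        norm_sum_range_smul_le_of_antitone hf (fun _ => harmonicProb_nonneg)
          (norm_geom_sum_exp_mul_I_le hξ0 hξ) R
    _ ≤ 2 / R * (π / |ξ|) := by gcongr; exact harmonicProb_le hRN (by omega)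
    _ = 2 * π / (R * |ξ|) := by ring

theorem one_sub_sq_norm_phiX (hR : 0 < R) :
    1 - ‖phiX N R ξ‖ ^ 2 = ∑ j ∈ Ioc N (N + R), ∑ k ∈ Ioc N (N + R),
      harmonicProb N R j * harmonicProb N R k * (1 - Real.cos (ξ * j - ξ * k)) := by
  have h := sq_sum_sub_sq_norm_sum_mul_exp (Ioc N (N + R)) (harmonicProb N R) fun j : ℕ => ξ * j
  rwa [sum_harmonicProb hR, one_pow, ← phiX_eq_sum_harmonicProb] at h

theorem le_one_sub_sq_norm_phiX (hR : 32 ≤ R) (hRN : R ≤ N) (hξ : |ξ| ≤ 16 / R) :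
    ξ ^ 2 * R ^ 2 / 2 ^ 21 ≤ 1 - ‖phiX N R ξ‖ ^ 2 := by
  set m := R / 16
  have h16m : 16 * m ≤ R := Nat.mul_div_le R 16
  have hR32m : R ≤ 32 * m := by omega
  have hRpos : (0 : ℝ) < R := by exact_mod_cast (show 0 < R by omega)
  have hrows : (R : ℝ) / 2 ≤ ((R - 2 * m : ℕ) : ℝ) := by
    rw [Nat.cast_sub (by omega)]
    push_cast
    linarith [show (16 * m : ℝ) ≤ R by exact_mod_cast h16m]
  have hm : (R : ℝ) / 32 ≤ m := by
    rw [div_le_iff₀ (by norm_num)]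
    exact_mod_cast hR32m.trans_eq (mul_comm _ _)
  rw [one_sub_sq_norm_phiX (by omega)]
  refine le_trans ?_ (le_sum_sum_of_band (m := m) (ε := ξ ^ 2 * m ^ 2 / (32 * R ^ 2))
    (by omega) (fun j _ k _ => ?_) fun j hj k hk => ?_)
  · calc ξ ^ 2 * R ^ 2 / 2 ^ 21
          = R / 2 * (R / 32 * (ξ ^ 2 * (R / 32) ^ 2 / (32 * R ^ 2))) := by field_simp; ring
      _ ≤ _ := by gcongr
  · exact mul_nonneg (mul_nonneg harmonicProb_nonneg harmonicProb_nonneg)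
      (sub_nonneg.2 (Real.cos_le_one _))
  · rw [mem_Ioc] at hj hk
    have hkj : (m : ℝ) ≤ k - j := by
      rw [le_sub_iff_add_le']
      exact_mod_cast (show j + m ≤ k by omega)
    have hkj' : (k : ℝ) - j ≤ 2 * m := by
      rw [sub_le_iff_le_add']
      exact_mod_cast (show k ≤ j + 2 * m by omega)
    refine le_harmonicProb_mul_one_sub_cos hRN (mem_Ioc.2 ⟨hj.1, by omega⟩)
      (mem_Ioc.2 ⟨by omega, by omega⟩) hkj ?_
    calc |ξ| * (k - j) ≤ 16 / R * (2 * m) := by gcongr; exact (Nat.cast_nonneg m).trans hkj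
      _ ≤ 2 := by
          rw [div_mul_eq_mul_div, div_le_iff₀ hRpos]
          linarith [show (16 * m : ℝ) ≤ R by exact_mod_cast h16m]
      _ ≤ π := Real.two_le_pi

end harmonicProb

theorem statement_17 :
    ∃ c : ℝ, 0 < c ∧ ∃ R₀ : ℕ, ∀ R N : ℕ, R₀ ≤ R → R ≤ N →
      (∀ ξ : ℝ, |ξ| ≤ 16 / (R : ℝ) →
        ‖phiX N R ξ‖ ≤ 1 - c * ξ ^ 2 * (R : ℝ) ^ 2) ∧
      (∀ ξ : ℝ, 16 / (R : ℝ) ≤ |ξ| → |ξ| ≤ Real.pi →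
        ‖phiX N R ξ‖ ≤ 1 / 2) := by
  refine ⟨1 / 2 ^ 22, by norm_num, 32, fun R N hR hRN => ⟨fun ξ hξ => ?_, fun ξ hlo hhi => ?_⟩⟩
  all_goals have hRpos : (0 : ℝ) < R := by exact_mod_cast (show 0 < R by omega)
  · have hξR : |ξ| * R ≤ 16 := (le_div_iff₀ hRpos).1 hξ
    have hsq : ξ ^ 2 * R ^ 2 ≤ 256 := by
      nlinarith [sq_abs ξ, abs_nonneg ξ, mul_nonneg (abs_nonneg ξ) hRpos.le]
    refine le_one_sub_of_sq_le (norm_nonneg _) (by nlinarith) ?_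
    linarith [le_one_sub_sq_norm_phiX hR hRN hξ]
  · have hξR : 16 ≤ R * |ξ| := by rwa [div_le_iff₀ hRpos, mul_comm] at hlo
    calc ‖phiX N R ξ‖ ≤ 2 * π / (R * |ξ|) :=
          norm_phiX_le hRN (abs_pos.1 ((div_pos (by norm_num) hRpos).trans_le hlo)) hhi
      _ ≤ 2 * 4 / 16 := by gcongr; exact Real.pi_le_four
      _ = 1 / 2 := by norm_num
end
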